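/- arXiv:0903.2779 — 4 statements merged into one kernel-verified Lean document; each statement's English description precedes it below -/
import Mathlib

section
/- A module M over a ring R is strongly Gorenstein projective if and only if there exists a short exact sequence 0 → M → P → M → 0 with P projective and Ext^1_R(M, Q) = 0 for every projective R-module Q. -/
open CategoryTheory

noncomputable section

namespace GW

variable (R : Type) [CommRing R]

/-- `M` is a Gorenstein projective module: there is a doubly infinite exact sequence of
projective modules, remaining exact under `Hom(-, Q)` for every projective `Q`, with `M`
isomorphic to one of its kernels (equivalently, images). -/
def IsGProj (M : ModuleCat.{0} R) : Prop :=
  ∃ (P : ℤ → ModuleCat.{0} R) (d : ∀ i, P i →ₗ[R] P (i + 1)),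
    (∀ i, Module.Projective R (P i)) ∧
    (∀ i, Function.Exact (d i) (d (i + 1))) ∧
    (∀ (Q : ModuleCat.{0} R), Module.Projective R Q →
      ∀ i, Function.Exact
        (fun g : P (i + 1 + 1) →ₗ[R] Q => g.comp (d (i + 1)))
        (fun g : P (i + 1) →ₗ[R] Q => g.comp (d i))) ∧
    Nonempty (M ≃ₗ[R] LinearMap.ker (d 0))

/-- `M` is a strongly Gorenstein projective module. -/
def IsSGProj (M : ModuleCat.{0} R) : Prop :=
  ∃ (P : ModuleCat.{0} R) (f : P →ₗ[R] P),
    Module.Projective R P ∧ Function.Exact f f ∧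
    (∀ (Q : ModuleCat.{0} R), Module.Projective R Q →
      Function.Exact (fun g : P →ₗ[R] Q => g.comp f) (fun g : P →ₗ[R] Q => g.comp f)) ∧
    Nonempty (M ≃ₗ[R] LinearMap.range f)

/-- Gorenstein projective dimension at most `n`, via resolutions by Gorenstein projectives. -/
def gpdLE : ℕ → ModuleCat.{0} R → Prop
  | 0, M => IsGProj R M
  | (n + 1), M => ∃ (K G : ModuleCat.{0} R) (f : K →ₗ[R] G) (g : G →ₗ[R] M),
      IsGProj R G ∧ Function.Injective f ∧ Function.Surjective g ∧
      Function.Exact f g ∧ gpdLE n K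

/-- Gorenstein projective dimension, valued in `ℕ∞`. -/
def gpd (M : ModuleCat.{0} R) : ℕ∞ := ⨅ (n : ℕ) (_ : gpdLE R n M), (n : ℕ∞)

/-- `M` is a Gorenstein flat module. -/
def IsGFlat (M : ModuleCat.{0} R) : Prop :=
  ∃ (F : ℤ → ModuleCat.{0} R) (d : ∀ i, F i →ₗ[R] F (i + 1)),
    (∀ i, Module.Flat R (F i)) ∧
    (∀ i, Function.Exact (d i) (d (i + 1))) ∧
    (∀ (I : ModuleCat.{0} R), Module.Injective R I →
      ∀ i, Function.Exact (LinearMap.lTensor I (d i)) (LinearMap.lTensor I (d (i + 1)))) ∧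
    Nonempty (M ≃ₗ[R] LinearMap.ker (d 0))

/-- Gorenstein flat dimension at most `n`. -/
def gfdLE : ℕ → ModuleCat.{0} R → Prop
  | 0, M => IsGFlat R M
  | (n + 1), M => ∃ (K G : ModuleCat.{0} R) (f : K →ₗ[R] G) (g : G →ₗ[R] M),
      IsGFlat R G ∧ Function.Injective f ∧ Function.Surjective g ∧
      Function.Exact f g ∧ gfdLE n K

/-- Gorenstein flat dimension, valued in `ℕ∞`. -/
def gfd (M : ModuleCat.{0} R) : ℕ∞ := ⨅ (n : ℕ) (_ : gfdLE R n M), (n : ℕ∞)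

/-- The Gorenstein weak dimension of `R`: the supremum of Gorenstein flat dimensions. -/
def gwdim : ℕ∞ := ⨆ M : ModuleCat.{0} R, gfd R M

/-- Projective dimension at most `n`. -/
def pdLE : ℕ → ModuleCat.{0} R → Prop
  | 0, M => Module.Projective R M
  | (n + 1), M => ∃ (K G : ModuleCat.{0} R) (f : K →ₗ[R] G) (g : G →ₗ[R] M),
      Module.Projective R G ∧ Function.Injective f ∧ Function.Surjective g ∧
      Function.Exact f g ∧ pdLE n K

/-- Projective dimension, valued in `ℕ∞`. -/
def pd (M : ModuleCat.{0} R) : ℕ∞ := ⨅ (n : ℕ) (_ : pdLE R n M), (n : ℕ∞)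

/-- Flat dimension at most `n`. -/
def fdLE : ℕ → ModuleCat.{0} R → Prop
  | 0, M => Module.Flat R M
  | (n + 1), M => ∃ (K G : ModuleCat.{0} R) (f : K →ₗ[R] G) (g : G →ₗ[R] M),
      Module.Flat R G ∧ Function.Injective f ∧ Function.Surjective g ∧
      Function.Exact f g ∧ fdLE n K

/-- Flat dimension, valued in `ℕ∞`. -/
def fd (M : ModuleCat.{0} R) : ℕ∞ := ⨅ (n : ℕ) (_ : fdLE R n M), (n : ℕ∞)

/-- A coherent ring: every finitely generated ideal is finitely presented. -/
def IsCoherentRing : Prop := ∀ I : Ideal R, I.FG → Module.FinitePresentation R I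

/-- `Ext^n_R(M, N)` as a module. -/
def extGrp (n : ℕ) (M N : ModuleCat.{0} R) : ModuleCat R :=
  ((Ext R (ModuleCat.{0} R) n).obj (Opposite.op M)).obj N

/-- `Tor_n^R(M, N)`. -/
def torGrp (n : ℕ) (M N : ModuleCat.{0} R) : ModuleCat.{0} R :=
  ((Tor (ModuleCat.{0} R) n).obj M).obj N

/-- The Gorenstein global dimension of `R` (the common value of the suprema of Gorenstein
projective and Gorenstein injective dimensions), here the supremum of `Gpd`. -/
def ggldim : ℕ∞ := ⨆ M : ModuleCat.{0} R, gpd R M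

/-- `M` admits a finite resolution of length `n` by finitely generated projective modules. -/
def finFGRes : ℕ → ModuleCat.{0} R → Prop
  | 0, M => Module.Projective R M ∧ Module.Finite R M
  | (n + 1), M => ∃ (K G : ModuleCat.{0} R) (f : K →ₗ[R] G) (g : G →ₗ[R] M),
      Module.Projective R G ∧ Module.Finite R G ∧ Function.Injective f ∧
      Function.Surjective g ∧ Function.Exact f g ∧ finFGRes n K

/-- The small finitistic projective dimension of `R`. -/
def fPD : ℕ∞ :=
  ⨆ (M : ModuleCat.{0} R) (_ : (∃ n, finFGRes R n M) ∧ pd R M ≠ ⊤), pd R M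

/-- The small finitistic Gorenstein projective dimension of `R`. -/
def fGPD : ℕ∞ :=
  ⨆ (M : ModuleCat.{0} R) (_ : (∃ n, finFGRes R n M) ∧ gpd R M ≠ ⊤), gpd R M

/-- An arithmetical ring: every finitely generated ideal is locally principal. -/
def IsArithmetical : Prop :=
  ∀ I : Ideal R, I.FG → ∀ (p : Ideal R) (hp : p.IsMaximal),
    haveI := hp.isPrime
    (I.map (algebraMap R (Localization.AtPrime p))).IsPrincipal

/-- A quasi-Frobenius ring: Noetherian and self-injective. -/
def IsQuasiFrobenius : Prop := IsNoetherianRing R ∧ Module.Injective R R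

/-- The submodule `X • N` of a module `N` over a power series ring. -/
def Xsub {R : Type} [CommRing R] (N : ModuleCat.{0} (PowerSeries R)) :
    Submodule (PowerSeries R) N :=
  LinearMap.range (LinearMap.lsmul (PowerSeries R) N PowerSeries.X)

lemma Xsub_le {R : Type} [CommRing R] {N N' : ModuleCat.{0} (PowerSeries R)}
    (f : N →ₗ[PowerSeries R] N') : Xsub N ≤ (Xsub N').comap f := by
  rintro x ⟨k, rfl⟩
  exact ⟨f k, (map_smul f _ _).symm⟩

/-- The induced map `N/XN → N'/XN'`. -/
def qmap {R : Type} [CommRing R] {N N' : ModuleCat.{0} (PowerSeries R)}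
    (f : N →ₗ[PowerSeries R] N') :
    (N ⧸ Xsub N) →ₗ[PowerSeries R] (N' ⧸ Xsub N') :=
  Submodule.mapQ _ _ f (Xsub_le f)

end GW

/-!
A short exact sequence `0 → M →f P →g M → 0` amounts to an endomorphism `F = f ∘ g` of `P` with
`ker F = im F ≅ M`. Splicing the sequence with itself gives the periodic projective resolution
`⋯ → P → P → P → M` with differentials `F`. Hence `Ext¹(M, Q)` is the middle homology of
`Hom(P, Q) → Hom(P, Q) → Hom(P, Q)`, both maps being precomposition with `F`, and its vanishing
is exactly the `Hom(-, Q)`-exactness demanded of a strongly Gorenstein projective module.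
-/

namespace LinearMap

variable {R M P : Type*} [Semiring R] [AddCommMonoid M] [AddCommMonoid P] [Module R M]
  [Module R P]

theorem exact_comp_self_of_shortExact {f : M →ₗ[R] P} {g : P →ₗ[R] M}
    (hf : Function.Injective f) (hg : Function.Surjective g) (hfg : Function.Exact f g) :
    Function.Exact (f ∘ₗ g) (f ∘ₗ g) :=
  hg.comp_exact_iff_exact.mpr (hf.comp_exact_iff_exact.mpr hfg)

theorem exists_shortExact_comp_eq_of_exact_self {F : P →ₗ[R] P} (hF : Function.Exact F F)
    (e : M ≃ₗ[R] range F) :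
    ∃ (f : M →ₗ[R] P) (g : P →ₗ[R] M), Function.Injective f ∧ Function.Surjective g ∧
      Function.Exact f g ∧ f ∘ₗ g = F := by
  refine ⟨(range F).subtype ∘ₗ e.toLinearMap, e.symm.toLinearMap ∘ₗ F.rangeRestrict,
    (Submodule.injective_subtype _).comp e.injective,
    e.symm.surjective.comp F.surjective_rangeRestrict,
    e.precomp_exact_iff_exact.mpr
      (e.symm.postcomp_exact_iff_exact.mpr hF.linearMap_rangeRestrict), ?_⟩
  ext x
  simp

end LinearMap

namespace GW

variable {R : Type} [CommRing R] {M P : ModuleCat.{0} R} {f : M →ₗ[R] P} {g : P →ₗ[R] M}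

def periodicComplex (hfg : Function.Exact f g) : ChainComplex (ModuleCat.{0} R) ℕ :=
  ChainComplex.of (fun _ => P) (fun _ => ModuleCat.ofHom (f ∘ₗ g)) fun _ => by
    ext x
    simpa using congrArg f (hfg.apply_apply_eq_zero (g x))

lemma periodicComplex_d (hfg : Function.Exact f g) (n : ℕ) :
    (periodicComplex hfg).d (n + 1) n = ModuleCat.ofHom (f ∘ₗ g) :=
  ChainComplex.of_d (fun _ => P) (fun _ => ModuleCat.ofHom (f ∘ₗ g)) n

lemma periodicComplex_d_comp_hom (hfg : Function.Exact f g) (n : ℕ) {Q : ModuleCat.{0} R}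
    (φ : P ⟶ Q) : ((periodicComplex hfg).d (n + 1) n ≫ φ).hom = φ.hom ∘ₗ (f ∘ₗ g) := by
  rw [periodicComplex_d]
  rfl

lemma periodicComplex_exactAt_succ (hf : Function.Injective f) (hg : Function.Surjective g)
    (hfg : Function.Exact f g) (n : ℕ) : (periodicComplex hfg).ExactAt (n + 1) := by
  rw [HomologicalComplex.exactAt_iff' _ (n + 2) (n + 1) n (by simp) (by simp),
    ShortComplex.ShortExact.moduleCat_exact_iff_function_exact]
  dsimp only [HomologicalComplex.sc', HomologicalComplex.shortComplexFunctor']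
  rw [periodicComplex_d, periodicComplex_d]
  exact (LinearMap.exact_comp_self_of_shortExact hf hg hfg :)

def periodicResolution [Module.Projective R P] (hf : Function.Injective f)
    (hg : Function.Surjective g) (hfg : Function.Exact f g) : ProjectiveResolution M where
  complex := periodicComplex hfg
  projective _ := ModuleCat.projective_of_categoryTheory_projective P
  π := (ChainComplex.toSingle₀Equiv _ _).symm ⟨ModuleCat.ofHom g, by
    rw [periodicComplex_d]
    ext x
    exact hfg.apply_apply_eq_zero (g x)⟩
  quasiIso := ⟨fun n => by
    cases n with
    | zero =>
      rw [ChainComplex.quasiIsoAt₀_iff, ShortComplex.quasiIso_iff_of_zeros']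
      · have hfgg : Function.Exact (f ∘ₗ g) g := hg.comp_exact_iff_exact.mpr hfg
        exact ⟨(ShortComplex.ShortExact.moduleCat_exact_iff_function_exact _).mpr hfgg,
          (ModuleCat.epi_iff_surjective _).mpr hg⟩
      · exact (periodicComplex hfg).shape 0 0 (by simp)
      all_goals rfl
    | succ n =>
      rw [quasiIsoAt_iff_exactAt']
      · exact periodicComplex_exactAt_succ hf hg hfg n
      · exact ChainComplex.exactAt_succ_single_obj _ _⟩

theorem subsingleton_extGrp_one_iff [Module.Projective R P] (hf : Function.Injective f)
    (hg : Function.Surjective g) (hfg : Function.Exact f g) (Q : ModuleCat.{0} R) :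
    Subsingleton (extGrp R 1 M Q) ↔
      Function.Exact (fun h : P →ₗ[R] Q => h ∘ₗ (f ∘ₗ g)) (fun h : P →ₗ[R] Q => h ∘ₗ (f ∘ₗ g)) := by
  rw [← ModuleCat.isZero_iff_subsingleton, extGrp,
    Iso.isZero_iff ((periodicResolution hf hg hfg).isoExt 1 Q),
    ← HomologicalComplex.exactAt_iff_isZero_homology,
    HomologicalComplex.exactAt_iff' _ 0 1 2 (by simp) (by simp),
    ShortComplex.ShortExact.moduleCat_exact_iff_function_exact]
  refine (Function.Exact.iff_of_ladder_linearEquiv (e₁ := ModuleCat.homLinearEquiv)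
    (e₂ := ModuleCat.homLinearEquiv) (e₃ := ModuleCat.homLinearEquiv)
    (g₁₂ := LinearMap.lcomp R Q (f ∘ₗ g)) (g₂₃ := LinearMap.lcomp R Q (f ∘ₗ g)) ?_ ?_).symm
  · exact LinearMap.ext fun φ => (periodicComplex_d_comp_hom hfg 0 φ).symm
  · exact LinearMap.ext fun φ => (periodicComplex_d_comp_hom hfg 1 φ).symm

end GW

/-- `M` is strongly Gorenstein projective iff there is a short exact sequence
`0 → M → P → M → 0` with `P` projective and `Ext¹(M, Q) = 0` for every projective `Q`. -/
theorem stmt4 (R : Type) [CommRing R] (M : ModuleCat.{0} R) :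
    GW.IsSGProj R M ↔
      ∃ (P : ModuleCat.{0} R) (f : M →ₗ[R] P) (g : P →ₗ[R] M),
        Module.Projective R P ∧ Function.Injective f ∧ Function.Surjective g ∧
        Function.Exact f g ∧
        (∀ Q : ModuleCat.{0} R, Module.Projective R Q →
          Subsingleton ↥(GW.extGrp R 1 M Q)) := by
  constructor
  · rintro ⟨P, F, hP, hFF, hHom, ⟨e⟩⟩
    obtain ⟨f, g, hf, hg, hfg, rfl⟩ := LinearMap.exists_shortExact_comp_eq_of_exact_self hFF e
    exact ⟨P, f, g, hP, hf, hg, hfg,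
      fun Q hQ => (GW.subsingleton_extGrp_one_iff hf hg hfg Q).mpr (hHom Q hQ)⟩
  · rintro ⟨P, f, g, hP, hf, hg, hfg, hExt⟩
    refine ⟨P, f ∘ₗ g, hP, LinearMap.exact_comp_self_of_shortExact hf hg hfg,
      fun Q hQ => (GW.subsingleton_extGrp_one_iff hf hg hfg Q).mp (hExt Q hQ), ⟨?_⟩⟩
    rw [LinearMap.range_comp_of_range_eq_top _ (LinearMap.range_eq_top.mpr hg)]
    exact LinearEquiv.ofInjective f hf
end
end

section
/- Every finitely generated Gorenstein projective module over a commutative ring R admits a right co-proper resolution by finitely generated free R-modules; i.e., there is an exact sequence 0 → M → L^0 → L^1 → ⋯ with each L^i finitely generated free, which remains exact after applying Hom_R(−, Q) for every projective module Q. -/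
open CategoryTheory

noncomputable section

/-!
A co-proper resolution is spliced together from short exact sequences `0 → N → L → C → 0`
that stay exact under `Hom(-, Q)` for every projective `Q`. Along the construction we keep the
invariant that `N` is finitely generated and `N × P` has a co-proper projective resolution for
some projective `P`; a Gorenstein projective module satisfies it with `P = 0`. Given such `N`,
let `N × P → X⁰` be the first step of that resolution. Since `N` is finitely generated, the
restriction `N → X⁰` factors through a finitely generated free module `L`, and `N → L` inherits
the extension property for maps into projectives. Schanuel's lemma, applied to `N × P → L × P`
and `N × P → X⁰`, gives `L/N × X⁰ ≅ (L × P) × X⁰/(N × P)`, so the cokernel `L/N` satisfies the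
invariant again.
-/

namespace GW

open LinearMap

variable {R : Type} [CommRing R]

section LinearAlgebra

variable {K L N P : Type} [AddCommGroup K] [Module R K] [AddCommGroup L] [Module R L]
  [AddCommGroup N] [Module R N] [AddCommGroup P] [Module R P]

theorem surjective_lcomp_of_exact_lcomp_comp (Q : Type) [AddCommGroup Q] [Module R Q]
    {c : K →ₗ[R] L} {ρ : L →ₗ[R] N} {ι : N →ₗ[R] P} (hcρ : Function.Exact c ρ)
    (hρ : Function.Surjective ρ) (h : Function.Exact (lcomp R Q (ι ∘ₗ ρ)) (lcomp R Q c)) :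
    Function.Surjective (lcomp R Q ι) := by
  intro g
  obtain ⟨k, hk⟩ := (h (g ∘ₗ ρ)).mp <| by
    rw [lcomp_apply', comp_assoc, hcρ.linearMap_comp_eq_zero, comp_zero]
  exact ⟨k, (cancel_right hρ).mp hk⟩

theorem _root_.Function.Exact.prodMap_id {j : N →ₗ[R] L} {π : L →ₗ[R] P}
    (h : Function.Exact j π) (Q : Type) [AddCommGroup Q] [Module R Q] :
    Function.Exact (j.prodMap (LinearMap.id : Q →ₗ[R] Q)) (π ∘ₗ fst R L Q) := by
  rintro ⟨y, q⟩
  rw [LinearMap.comp_apply, fst_apply, h y]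
  exact ⟨fun ⟨x, hx⟩ => ⟨(x, q), by rw [prodMap_apply, hx, LinearMap.id_apply]⟩,
    fun ⟨x, hx⟩ => ⟨x.1, congrArg Prod.fst hx⟩⟩

theorem exists_free_finite_factorization [Module.Finite R N] [Module.Projective R P]
    (e : N →ₗ[R] P) :
    ∃ (F : ModuleCat.{0} R) (j : N →ₗ[R] F) (s : F →ₗ[R] P),
      Module.Free R F ∧ Module.Finite R F ∧ s ∘ₗ j = e := by
  obtain ⟨sec, hsec⟩ := Module.projective_def'.mp ‹Module.Projective R P›
  obtain ⟨S, hS⟩ := Submodule.fg_range (sec ∘ₗ e)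
  let U : Set P := ⋃ x ∈ S, (x.support : Set P)
  have hU : range (sec ∘ₗ e) ≤ Finsupp.supported R R U :=
    hS ▸ Finsupp.span_le_supported_biUnion_support R _
  have : Finite U := (S.finite_toSet.biUnion fun x _ => x.support.finite_toSet).to_subtype
  refine ⟨ModuleCat.of R (Finsupp.supported R R U),
    (sec ∘ₗ e).codRestrict _ fun n => hU ⟨n, rfl⟩,
    Finsupp.linearCombination R _root_.id ∘ₗ (Finsupp.supported R R U).subtype,
    .of_equiv (Finsupp.supportedEquivFinsupp U).symm,
    .equiv (Finsupp.supportedEquivFinsupp U).symm, ?_⟩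
  ext n
  exact LinearMap.congr_fun hsec (e n)

end LinearAlgebra

section Schanuel

variable {K A B : Type} [AddCommGroup K] [Module R K] [AddCommGroup A] [Module R A]
  [AddCommGroup B] [Module R B] {a : K →ₗ[R] A} {b : K →ₗ[R] B} {u : A →ₗ[R] B} {v : B →ₗ[R] A}

def schanuelEquiv (hu : u ∘ₗ a = b) (hv : v ∘ₗ b = a) :
    ((A ⧸ range a) × B) ≃ₗ[R] (A × (B ⧸ range b)) :=
  have hu' (k : K) : u (a k) = b k := LinearMap.congr_fun hu k
  have hv' (k : K) : v (b k) = a k := LinearMap.congr_fun hv k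
  LinearEquiv.ofLinearMap
    (coprod ((range a).liftQ (prod (LinearMap.id - v ∘ₗ u) (-((range b).mkQ ∘ₗ u)))
      (by rintro _ ⟨k, rfl⟩; simp [hu', hv']))
      (prod v (range b).mkQ))
    (coprod (prod (range a).mkQ u)
      ((range b).liftQ (prod (-((range a).mkQ ∘ₗ v)) (LinearMap.id - u ∘ₗ v))
      (by rintro _ ⟨k, rfl⟩; simp [hu', hv'])))
    (by ext <;> simp) (by ext <;> simp)

theorem schanuel {C D : Type} [AddCommGroup C] [Module R C] [AddCommGroup D] [Module R D]
    {p : A →ₗ[R] C} {q : B →ₗ[R] D} (hap : Function.Exact a p) (hp : Function.Surjective p)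
    (hbq : Function.Exact b q) (hq : Function.Surjective q) (hu : u ∘ₗ a = b) (hv : v ∘ₗ b = a) :
    Nonempty ((C × B) ≃ₗ[R] (A × D)) :=
  ⟨(((hap.linearEquivOfSurjective hp).symm.prodCongr (LinearEquiv.refl R B)).trans
    (schanuelEquiv hu hv)).trans
    ((LinearEquiv.refl R A).prodCongr (hbq.linearEquivOfSurjective hq))⟩

end Schanuel

section CoproperSES

variable {K N L C : Type} [AddCommGroup K] [Module R K] [AddCommGroup N] [Module R N]
  [AddCommGroup L] [Module R L] [AddCommGroup C] [Module R C] {j : N →ₗ[R] L} {π : L →ₗ[R] C}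

/-- Since `Hom(-, Q)` is left exact, exactness of `0 → Hom(C, Q) → Hom(L, Q) → Hom(N, Q) → 0`
amounts to the surjectivity in `extend`. -/
structure IsCoproperSES (j : N →ₗ[R] L) (π : L →ₗ[R] C) : Prop where
  injective : Function.Injective j
  exact : Function.Exact j π
  surjective : Function.Surjective π
  extend : ∀ Q : ModuleCat.{0} R, Module.Projective R Q → Function.Surjective (lcomp R Q j)

theorem IsCoproperSES.prodMap_id (h : IsCoproperSES j π) (Q : Type) [AddCommGroup Q]
    [Module R Q] : IsCoproperSES (j.prodMap (LinearMap.id : Q →ₗ[R] Q)) (π ∘ₗ fst R L Q) where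
  injective := h.injective.prodMap Function.injective_id
  exact := h.exact.prodMap_id Q
  surjective := h.surjective.comp Prod.fst_surjective
  extend Q' hQ' g := by
    obtain ⟨k, hk⟩ := h.extend Q' hQ' (g ∘ₗ inl R N Q)
    refine ⟨k.coprod (g ∘ₗ inr R N Q), ?_⟩
    ext x
    · simpa [Prod.mk_zero_zero] using LinearMap.congr_fun hk x
    · simp

theorem IsCoproperSES.comp_equiv (h : IsCoproperSES j π) (σ : K ≃ₗ[R] N) :
    IsCoproperSES (j ∘ₗ σ.toLinearMap) π where
  injective := h.injective.comp σ.injective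
  exact := LinearEquiv.precomp_exact_iff_exact.mpr h.exact
  surjective := h.surjective
  extend Q hQ g := by
    obtain ⟨k, hk⟩ := h.extend Q hQ (g ∘ₗ σ.symm.toLinearMap)
    exact ⟨k, by ext x; simpa using LinearMap.congr_fun hk (σ x)⟩

end CoproperSES

def HasCoproperResolution (T : ModuleCat.{0} R → Prop) (N : ModuleCat.{0} R) : Prop :=
  ∃ (L : ℕ → ModuleCat.{0} R) (e : N →ₗ[R] L 0) (d : ∀ i, L i →ₗ[R] L (i + 1)),
    (∀ i, T (L i)) ∧ Function.Injective e ∧ Function.Exact e (d 0) ∧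
    (∀ i, Function.Exact (d i) (d (i + 1))) ∧
    ∀ Q : ModuleCat.{0} R, Module.Projective R Q →
      Function.Surjective (lcomp R Q e) ∧ Function.Exact (lcomp R Q (d 0)) (lcomp R Q e) ∧
      ∀ i, Function.Exact (lcomp R Q (d (i + 1))) (lcomp R Q (d i))

namespace HasCoproperResolution

variable {T : ModuleCat.{0} R → Prop}

theorem splice {N L : ℕ → ModuleCat.{0} R} (j : ∀ i, N i →ₗ[R] L i)
    (π : ∀ i, L i →ₗ[R] N (i + 1)) (hT : ∀ i, T (L i)) (hs : ∀ i, IsCoproperSES (j i) (π i)) :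
    HasCoproperResolution T (N 0) :=
  ⟨L, j 0, fun i => j (i + 1) ∘ₗ π i, hT, (hs 0).injective,
    (hs 1).injective.comp_exact_iff_exact.mpr (hs 0).exact,
    fun i => (hs (i + 2)).injective.comp_exact_iff_exact.mpr
      ((hs i).surjective.comp_exact_iff_exact.mpr (hs (i + 1)).exact),
    fun Q hQ => ⟨(hs 0).extend Q hQ,
      ((hs 1).extend Q hQ).comp_exact_iff_exact.mpr
        (exact_lcomp_of_exact_of_surjective Q (hs 0).exact (hs 0).surjective),
      fun i => (lcomp_injective_of_surjective _ (hs i).surjective).comp_exact_iff_exact.mpr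
        (((hs (i + 2)).extend Q hQ).comp_exact_iff_exact.mpr
          (exact_lcomp_of_exact_of_surjective Q (hs (i + 1)).exact (hs (i + 1)).surjective))⟩⟩

theorem coinduct {S : ModuleCat.{0} R → Prop}
    (step : ∀ N, S N → ∃ (L C : ModuleCat.{0} R) (j : N →ₗ[R] L) (π : L →ₗ[R] C),
      T L ∧ IsCoproperSES j π ∧ S C)
    {N : ModuleCat.{0} R} (hN : S N) : HasCoproperResolution T N := by
  choose L C j π hT hs hC using fun K : {K // S K} => step K.1 K.2
  let K : ℕ → {K // S K} := fun n => Nat.rec ⟨N, hN⟩ (fun _ K => ⟨C K, hC K⟩) n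
  exact splice (N := fun n => (K n).1) (fun n => j (K n)) (fun n => π (K n))
    (fun n => hT (K n)) (fun n => hs (K n))

theorem exists_coproperSES {N : ModuleCat.{0} R} (h : HasCoproperResolution T N) :
    ∃ (L C : ModuleCat.{0} R) (j : N →ₗ[R] L) (π : L →ₗ[R] C),
      T L ∧ IsCoproperSES j π ∧ HasCoproperResolution T C := by
  obtain ⟨L, e, d, hT, he, hed, hd, hHom⟩ := h
  have hρ : Function.Exact e (d 0).rangeRestrict :=
    (range (d 0)).injective_subtype.comp_exact_iff_exact.mp hed
  refine ⟨L 0, ModuleCat.of R (range (d 0)), e, (d 0).rangeRestrict, hT 0,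
    ⟨he, hρ, (d 0).surjective_rangeRestrict, fun Q hQ => (hHom Q hQ).1⟩,
    fun i => L (i + 1), (range (d 0)).subtype, fun i => d (i + 1), fun i => hT (i + 1),
    (range (d 0)).injective_subtype, ?_, fun i => hd (i + 1),
    fun Q hQ => ⟨?_, ?_, fun i => (hHom Q hQ).2.2 (i + 1)⟩⟩
  · intro x
    rw [hd 0 x]
    exact ⟨fun hx => ⟨⟨x, hx⟩, rfl⟩, fun ⟨y, hy⟩ => hy ▸ y.2⟩
  · exact surjective_lcomp_of_exact_lcomp_comp Q hρ (d 0).surjective_rangeRestrict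
      (hHom Q hQ).2.1
  · exact (lcomp_injective_of_surjective _ (d 0).surjective_rangeRestrict).comp_exact_iff_exact.mp
      ((hHom Q hQ).2.2 0)

theorem of_equiv_prod {N Q K : ModuleCat.{0} R} [Module.Projective R Q]
    (hN : HasCoproperResolution (Module.Projective R ·) N) (σ : K ≃ₗ[R] N × Q) :
    HasCoproperResolution (Module.Projective R ·) K := by
  refine coinduct (S := fun K => ∃ (N Q : ModuleCat.{0} R),
    HasCoproperResolution (Module.Projective R ·) N ∧ Module.Projective R Q ∧
      Nonempty (K ≃ₗ[R] N × Q)) ?_ ⟨N, Q, hN, inferInstance, ⟨σ⟩⟩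
  rintro K ⟨N, Q, hN, hQ, ⟨σ⟩⟩
  obtain ⟨X, C, e, π, hX, hs, hC⟩ := hN.exists_coproperSES
  exact ⟨ModuleCat.of R (X × Q), C, _, _, inferInstanceAs (Module.Projective R (X × Q)),
    (hs.prodMap_id Q).comp_equiv σ,
    C, ModuleCat.of R PUnit, hC, inferInstance, ⟨LinearEquiv.prodUnique.symm⟩⟩

theorem ker {K₂ K₁ : ModuleCat.{0} R} {L : ℕ → ModuleCat.{0} R}
    {c : K₂ →ₗ[R] K₁} {a : K₁ →ₗ[R] L 0} {d : ∀ n, L n →ₗ[R] L (n + 1)}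
    (hL : ∀ n, Module.Projective R (L n)) (hca : Function.Exact c a)
    (had : Function.Exact a (d 0)) (hd : ∀ n, Function.Exact (d n) (d (n + 1)))
    (hHom : ∀ Q : ModuleCat.{0} R, Module.Projective R Q →
      Function.Exact (lcomp R Q a) (lcomp R Q c) ∧
      Function.Exact (lcomp R Q (d 0)) (lcomp R Q a) ∧
      ∀ n, Function.Exact (lcomp R Q (d (n + 1))) (lcomp R Q (d n))) :
    HasCoproperResolution (Module.Projective R ·) (ModuleCat.of R (LinearMap.ker (d 0))) := by
  let ρ : K₁ →ₗ[R] LinearMap.ker (d 0) := a.codRestrict _ had.apply_apply_eq_zero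
  have hρ : Function.Surjective ρ := by
    rintro ⟨y, hy⟩
    obtain ⟨x, rfl⟩ := (had y).mp hy
    exact ⟨x, rfl⟩
  have hcρ : Function.Exact c ρ :=
    (LinearMap.ker (d 0)).injective_subtype.comp_exact_iff_exact.mp hca
  exact ⟨L, (LinearMap.ker (d 0)).subtype, d, hL, (LinearMap.ker (d 0)).injective_subtype,
    exact_subtype_ker_map _, hd,
    fun Q hQ => ⟨surjective_lcomp_of_exact_lcomp_comp Q hcρ hρ (hHom Q hQ).1,
      (lcomp_injective_of_surjective _ hρ).comp_exact_iff_exact.mp (hHom Q hQ).2.1,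
      (hHom Q hQ).2.2⟩⟩

end HasCoproperResolution

def IsStablyCoproper (N : ModuleCat.{0} R) : Prop :=
  ∃ P : ModuleCat.{0} R, Module.Projective R P ∧
    HasCoproperResolution (Module.Projective R ·) (ModuleCat.of R (N × P))

theorem IsGProj.isStablyCoproper {M : ModuleCat.{0} R} (hM : IsGProj R M) :
    IsStablyCoproper M := by
  obtain ⟨P, d, hP, hd, hHom, ⟨σ⟩⟩ := hM
  -- `-2 + 1 = -1` and `-1 + 1 = 0` hold only by unfolding, so the indices are fixed by ascription
  have hd₂ : Function.Exact (d (-2)) (d (-1)) := hd (-2)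
  have hd₁ : Function.Exact (d (-1)) (d 0) := hd (-1)
  have hHom₂ (Q : ModuleCat.{0} R) (hQ : Module.Projective R Q) :
      Function.Exact (lcomp R Q (d (-1))) (lcomp R Q (d (-2))) := by
    exact hHom Q hQ (-2)
  have hHom₁ (Q : ModuleCat.{0} R) (hQ : Module.Projective R Q) :
      Function.Exact (lcomp R Q (d 0)) (lcomp R Q (d (-1))) := by
    exact hHom Q hQ (-1)
  have hK := HasCoproperResolution.ker (L := fun n => P n) (d := fun n => d n)
    (fun n => hP n) hd₂ hd₁ (fun n => hd n)
    (fun Q hQ => ⟨hHom₂ Q hQ, hHom₁ Q hQ, fun n => hHom Q hQ n⟩)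
  exact ⟨ModuleCat.of R PUnit, inferInstance,
    hK.of_equiv_prod (Q := ModuleCat.of R PUnit) (σ.prodCongr (LinearEquiv.refl R PUnit))⟩

theorem IsStablyCoproper.exists_free_finite_coproperSES {N : ModuleCat.{0} R}
    [Module.Finite R N] (h : IsStablyCoproper N) :
    ∃ (L C : ModuleCat.{0} R) (j : N →ₗ[R] L) (π : L →ₗ[R] C),
      (Module.Free R L ∧ Module.Finite R L) ∧ IsCoproperSES j π ∧
      Module.Finite R C ∧ IsStablyCoproper C := by
  obtain ⟨P, hP, hNP⟩ := h
  obtain ⟨X, C₀, e₀, π₀, hX, hs₀, hC₀⟩ := hNP.exists_coproperSES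
  obtain ⟨L, j, s, hfree, hfin, hsj⟩ := exists_free_finite_factorization (e₀ ∘ₗ inl R N P)
  have hsj' (x : N) : s (j x) = e₀ (x, 0) := LinearMap.congr_fun hsj x
  have hj : IsCoproperSES j (range j).mkQ := by
    refine ⟨Function.Injective.of_comp (f := s) ?_, exact_map_mkQ_range j,
      (range j).mkQ_surjective, fun Q hQ g => ?_⟩
    · rw [← coe_comp, hsj]
      exact hs₀.injective.comp inl_injective
    · obtain ⟨k, hk⟩ := hs₀.extend Q hQ (g ∘ₗ fst R N P)
      refine ⟨k ∘ₗ s, ?_⟩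
      ext x
      simpa [hsj'] using LinearMap.congr_fun hk (x, 0)
  have : Module.Projective R L := Module.Projective.of_free
  obtain ⟨v, hv⟩ := hs₀.extend (ModuleCat.of R (L × P)) inferInstance (j.prodMap LinearMap.id)
  have hu : s.coprod (e₀ ∘ₗ inr R N P) ∘ₗ j.prodMap LinearMap.id = e₀ := by
    ext x <;> simp [hsj', Prod.mk_zero_zero]
  obtain ⟨σ⟩ := schanuel (hj.exact.prodMap_id P) (hj.surjective.comp Prod.fst_surjective)
    hs₀.exact hs₀.surjective hu hv
  exact ⟨L, ModuleCat.of R (L ⧸ range j), j, _, ⟨hfree, hfin⟩, hj, inferInstance, X, hX,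
    hC₀.of_equiv_prod (Q := ModuleCat.of R (L × P)) (σ.trans (LinearEquiv.prodComm R _ _))⟩

end GW

/-- every finitely generated Gorenstein projective module admits a right
co-proper resolution by finitely generated free modules. -/
theorem stmt7 (R : Type) [CommRing R] (M : ModuleCat.{0} R) (hfg : Module.Finite R M)
    (hM : GW.IsGProj R M) :
    ∃ (L : ℕ → ModuleCat.{0} R) (e : M →ₗ[R] L 0) (d : ∀ i, L i →ₗ[R] L (i + 1)),
      (∀ i, Module.Free R (L i) ∧ Module.Finite R (L i)) ∧
      Function.Injective e ∧ Function.Exact e (d 0) ∧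
      (∀ i, Function.Exact (d i) (d (i + 1))) ∧
      (∀ Q : ModuleCat.{0} R, Module.Projective R Q →
        Function.Surjective (fun h : L 0 →ₗ[R] Q => h.comp e) ∧
        Function.Exact (fun h : L (0 + 1) →ₗ[R] Q => h.comp (d 0))
          (fun h : L 0 →ₗ[R] Q => h.comp e) ∧
        (∀ i, Function.Exact (fun h : L (i + 1 + 1) →ₗ[R] Q => h.comp (d (i + 1)))
          (fun h : L (i + 1) →ₗ[R] Q => h.comp (d i)))) :=
  GW.HasCoproperResolution.coinduct (T := fun L => Module.Free R L ∧ Module.Finite R L)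
    (S := fun N => Module.Finite R N ∧ GW.IsStablyCoproper N)
    (fun _ ⟨_, hN⟩ => hN.exists_free_finite_coproperSES) ⟨hfg, hM.isStablyCoproper⟩
end
end

section
/- Let (R, m) be a local quasi-Frobenius commutative ring which is not a field. Then R[[X]] is not an arithmetical ring; specifically, for any nonzero non-invertible a ∈ R, the ideal aR[[X]] + XR[[X]] of R[[X]] is not principal. -/
open CategoryTheory

noncomputable section

/-!
If `(C a, X) = (f)` in `R⟦X⟧` and `X = h * f`, comparing coefficients of `X` gives
`h₀ f₁ + h₁ f₀ = 1`, while `f₀` is a multiple of `a`; hence `a` and `h₀` have no common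
annihilator. In a self-injective ring a finitely generated faithful ideal is the whole ring, so
`(a, h₀) = R`. But `h₀ f₀ = 0` with `f₀ ∣ a ≠ 0` forces `h₀` to be a nonunit, and so is `a`: in a
local ring this is impossible.
-/

open PowerSeries

universe u

theorem Ideal.eq_top_of_fg_of_annihilator_eq_bot {R : Type u} [CommRing R]
    [Module.Injective R R] {I : Ideal R} (hI : I.FG) (hann : I.annihilator = ⊥) : I = ⊤ := by
  classical
  obtain ⟨s, rfl⟩ := hI
  let ψ : R →ₗ[R] (s → R) := LinearMap.pi fun x => LinearMap.toSpanSingleton R R x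
  have hψ : Function.Injective ψ := by
    rw [← LinearMap.ker_eq_bot, eq_bot_iff]
    intro t ht
    rw [← hann, Submodule.mem_annihilator_span]
    exact congrFun ht
  obtain ⟨π, hπ⟩ := Module.Injective.out ψ hψ LinearMap.id
  rw [Ideal.eq_top_iff_one, ← show π (ψ 1) = 1 from hπ 1, pi_eq_sum_univ' (ψ 1), map_sum]
  refine Ideal.sum_mem _ fun x _ => ?_
  rw [map_smul, smul_eq_mul]
  exact Ideal.mul_mem_right _ _ (Ideal.subset_span (by simp [ψ]))

theorem Ideal.isPrincipal_of_isPrincipal_map_localization_atMaximal {A : Type*} [CommRing A]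
    [IsLocalRing A] {I : Ideal A}
    (h : (I.map (algebraMap A (Localization.AtPrime (IsLocalRing.maximalIdeal A)))).IsPrincipal) :
    I.IsPrincipal := by
  let e := (IsLocalization.atUnits A (IsLocalRing.maximalIdeal A).primeCompl
    (S := Localization.AtPrime (IsLocalRing.maximalIdeal A))
    fun _ hx => IsLocalRing.notMem_maximalIdeal.mp hx).symm.toRingEquiv.toRingHom
  have he : e.comp (algebraMap A _) = RingHom.id A := by
    ext x
    simp [e]
  simpa [Ideal.map_map, he] using h.map_ringHom e

theorem GW.IsArithmetical.isPrincipal_of_fg {A : Type} [CommRing A] [IsLocalRing A]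
    (h : GW.IsArithmetical A) {I : Ideal A} (hI : I.FG) : I.IsPrincipal :=
  Ideal.isPrincipal_of_isPrincipal_map_localization_atMaximal
    (h I hI _ (IsLocalRing.maximalIdeal.isMaximal A))

theorem PowerSeries.exists_not_isUnit_annihilator_span_pair_eq_bot {R : Type*} [CommRing R]
    {a : R} (ha : a ≠ 0) (hpr : (Ideal.span {C a, X} : Ideal R⟦X⟧).IsPrincipal) :
    ∃ b : R, ¬IsUnit b ∧ (Ideal.span {a, b}).annihilator = ⊥ := by
  obtain ⟨f, hf⟩ := hpr
  rw [Ideal.submodule_span_eq] at hf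
  obtain ⟨g, hg⟩ := Ideal.mem_span_singleton'.mp (hf ▸ Ideal.subset_span (by simp) :
    C a ∈ Ideal.span {f})
  obtain ⟨h, hh⟩ := Ideal.mem_span_singleton'.mp (hf ▸ Ideal.subset_span (by simp) :
    X ∈ Ideal.span {f})
  obtain ⟨p, q, hpq⟩ := Ideal.mem_span_pair.mp (hf ▸ Ideal.mem_span_singleton_self f :
    f ∈ Ideal.span {C a, X})
  have hga : constantCoeff g * constantCoeff f = a := by
    simpa using congrArg constantCoeff hg
  have hhf : constantCoeff h * constantCoeff f = 0 := by
    simpa using congrArg constantCoeff hh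
  have hfa : constantCoeff f = constantCoeff p * a := by
    simpa using (congrArg constantCoeff hpq).symm
  have hone : coeff 1 h * constantCoeff f + coeff 1 f * constantCoeff h = 1 := by
    simpa [coeff_one_mul] using congrArg (coeff 1) hh
  refine ⟨constantCoeff h, fun hu => ha ?_, ?_⟩
  · rw [← hga, hu.mul_right_eq_zero.mp hhf, mul_zero]
  · rw [eq_bot_iff]
    intro t ht
    rw [Submodule.mem_annihilator_span] at ht
    have hta : t * a = 0 := ht ⟨a, by simp⟩
    have htb : t * constantCoeff h = 0 := ht ⟨_, by simp⟩
    rw [Submodule.mem_bot, ← mul_one t, ← hone]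
    linear_combination (coeff 1 h * constantCoeff p) * hta + coeff 1 f * htb +
      (t * coeff 1 h) * hfa

theorem PowerSeries.not_isPrincipal_span_C_X {R : Type u} [CommRing R] [IsLocalRing R]
    [Module.Injective R R] {a : R} (ha : a ≠ 0) (hau : ¬IsUnit a) :
    ¬(Ideal.span {C a, X} : Ideal R⟦X⟧).IsPrincipal := fun hpr => by
  obtain ⟨b, hb, hann⟩ := exists_not_isUnit_annihilator_span_pair_eq_bot ha hpr
  have htop := Ideal.eq_top_of_fg_of_annihilator_eq_bot (Submodule.fg_span (Set.toFinite _)) hann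
  have hle : Ideal.span {a, b} ≤ IsLocalRing.maximalIdeal R := by
    rw [Ideal.span_le, Set.insert_subset_iff, Set.singleton_subset_iff]
    exact ⟨hau, hb⟩
  exact (IsLocalRing.maximalIdeal.isMaximal R).ne_top (top_le_iff.mp (htop ▸ hle))

/-- if `(R, m)` is a local quasi-Frobenius ring which is not a field, then
`R[[X]]` is not arithmetical; specifically for any nonzero non-invertible `a ∈ R` the
ideal `aR[[X]] + XR[[X]]` is not principal. -/
theorem stmt14 (R : Type) [CommRing R] [IsLocalRing R] (hQF : GW.IsQuasiFrobenius R)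
    (hnf : ¬ IsField R) :
    ¬ GW.IsArithmetical (PowerSeries R) ∧
    ∀ a : R, a ≠ 0 → ¬ IsUnit a →
      ¬ (Ideal.span {PowerSeries.C a, PowerSeries.X} :
          Ideal (PowerSeries R)).IsPrincipal := by
  have : Module.Injective R R := hQF.2
  refine ⟨fun harith => ?_, fun a => not_isPrincipal_span_C_X⟩
  obtain ⟨a, ham, ha⟩ :=
    Submodule.ne_bot_iff _ |>.mp (mt IsLocalRing.isField_iff_maximalIdeal_eq.mpr hnf)
  exact not_isPrincipal_span_C_X ha ((IsLocalRing.mem_maximalIdeal a).mp ham)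
    (harith.isPrincipal_of_fg (Submodule.fg_span (Set.toFinite _)))
end
end

section
/- Let (R, m) be a local commutative ring which is not a field (more generally, which has a nonzero non-invertible element a such that every zero divisor of R lies in m). Then the ideal I = aR[[X]] + XR[[X]] of R[[X]] is not principal, where a is any nonzero non-unit of R. -/
open CategoryTheory

noncomputable section

/-!
Over a local ring `R`, the series `X` is irreducible in `R⟦X⟧`: this can be read off in
`(R ⧸ 𝔪)⟦X⟧`, because reduction modulo `𝔪` is a local homomorphism. If the ideal `(a, X)` were
`(P)`, then `P` divides `X` and is not a unit (the ideal lies in the maximal ideal since `a` is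
not a unit), so `P` is associated to `X`. Then `X ∣ a`, which forces `a = 0`.
-/

namespace PowerSeries

variable {R : Type*} [CommRing R] [IsLocalRing R]

theorem X_irreducible_of_isLocalRing : Irreducible (X : R⟦X⟧) :=
  Irreducible.of_map (f := map (IsLocalRing.residue R)) (by rw [map_X]; exact X_irreducible)

theorem span_C_X_le_maximalIdeal {a : R} (ha : ¬ IsUnit a) :
    Ideal.span {C a, X} ≤ IsLocalRing.maximalIdeal R⟦X⟧ := by
  rw [Ideal.span_le, Set.insert_subset_iff, Set.singleton_subset_iff]
  exact ⟨fun h ↦ ha (by simpa using isUnit_constantCoeff _ h),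
    X_irreducible_of_isLocalRing.not_isUnit⟩

end PowerSeries

/-- if `(R, m)` is local and `a` is a nonzero non-unit of `R`, then the
ideal `aR[[X]] + XR[[X]]` of `R[[X]]` is not principal. -/
theorem stmt15 (R : Type) [CommRing R] [IsLocalRing R] (a : R) (ha0 : a ≠ 0)
    (ha : ¬ IsUnit a) :
    ¬ (Ideal.span {PowerSeries.C a, PowerSeries.X} :
        Ideal (PowerSeries R)).IsPrincipal := by
  rintro ⟨P, hP : _ = Ideal.span {P}⟩
  have hP_dvd_X : P ∣ PowerSeries.X :=
    Ideal.mem_span_singleton.mp (hP ▸ Ideal.subset_span (by simp))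
  have hP_dvd_Ca : P ∣ PowerSeries.C a :=
    Ideal.mem_span_singleton.mp (hP ▸ Ideal.subset_span (by simp))
  have hP_nonunit : ¬ IsUnit P := fun hu ↦
    PowerSeries.span_C_X_le_maximalIdeal ha (hP ▸ Ideal.mem_span_singleton_self P) hu
  obtain hu | hX_assoc_P := PowerSeries.X_irreducible_of_isLocalRing.dvd_iff.mp hP_dvd_X
  · exact hP_nonunit hu
  have hX_dvd_Ca : PowerSeries.X ∣ PowerSeries.C a := hX_assoc_P.dvd_iff_dvd_left.mpr hP_dvd_Ca
  exact ha0 (by simpa using PowerSeries.X_dvd_iff.mp hX_dvd_Ca)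
end
end
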